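/- arXiv:2307.02645 — 2 statements merged into one kernel-verified Lean document; each statement's English description precedes it below -/
import Mathlib

section
/- Let a, b be positive integers and μ a partition of ab with μ ⊆ (a^(b+1)) (i.e., μ has at most b+1 parts, each at most a). Then there is exactly one semistandard Young tableau of shape (a^b) and content μ. -/
/-- A partition, written as a weakly decreasing list of positive parts. -/
def IsPartitionL (l : List ℕ) : Prop := l.Pairwise (· ≥ ·) ∧ ∀ x ∈ l, 0 < x

/-- The shape of a tableau (rows listed bottom-to-top, French notation). -/
def shapeOf (t : List (List ℕ)) : List ℕ := t.map List.length

/-- Reading word: concatenate the rows from top to bottom. -/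
def readingWord (t : List (List ℕ)) : List ℕ := t.reverse.flatten

/-- Semistandard Young tableau (rows bottom-to-top): nonempty rows, weakly
increasing rows, positive entries, and strictly increasing columns. -/
def IsSSYT (t : List (List ℕ)) : Prop :=
  ([] ∉ t) ∧
  (∀ r ∈ t, List.Pairwise (· ≤ ·) r) ∧
  (∀ r ∈ t, ∀ x ∈ r, 0 < x) ∧
  List.Chain' (fun low up => up.length ≤ low.length ∧
    ∀ p < up.length, low.getD p 0 < up.getD p 0) t

/-- The tableau has `μ i` copies of the letter `i+1` (and no other letters). -/
def HasContent (t : List (List ℕ)) (μ : List ℕ) : Prop :=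
  ∀ i, t.flatten.count (i + 1) = μ.getD i 0

/-- The statistic n(λ) = Σ (i-1)λᵢ. -/
def nstatL (l : List ℕ) : ℕ := ∑ i ∈ Finset.range l.length, i * l.getD i 0

/-!
Count rows from `0` at the bottom. Column strictness and positivity force every entry of row `k`
to be at least `k + 1`; since no letter exceeds `b + 1`, the same argument from the top row down
forces it to be at most `k + 2`. A sorted row over `{k + 1, k + 2}` is determined by the number
`x k` of its letters `k + 1`, and the content gives `x 0 = μ₁` and
`x k + (a - x (k - 1)) = μ_{k+1}`, so the tableau is unique. Conversely
`x k = μ₁ + ⋯ + μ_{k+1} - k a` lies in `[0, a]` and decreases weakly in `k` because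
`μ ⊆ (a^(b+1))`, which makes the resulting filling semistandard.
-/

open List

theorem List.sum_map_range_eq_sum_range {M : Type*} [AddCommMonoid M] (n : ℕ) (f : ℕ → M) :
    ((range n).map f).sum = ∑ k ∈ Finset.range n, f k := by
  rw [Finset.sum_eq_multiset_sum, Finset.range_val, Multiset.range, Multiset.map_coe,
    Multiset.sum_coe]

theorem List.sum_take_succ_eq_add_getD {M : Type*} [AddMonoid M] (l : List M) (k : ℕ) :
    (l.take (k + 1)).sum = (l.take k).sum + l.getD k 0 := by
  rcases lt_or_ge k l.length with hk | hk
  · rw [sum_take_succ _ _ hk, getD_eq_getElem _ _ hk]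
  · rw [take_of_length_le hk, take_of_length_le (by omega), getD_eq_default _ _ hk, add_zero]

theorem List.pairwise_replicate_append_replicate {α : Type*} [Preorder α] {c d : α}
    (hcd : c ≤ d) (m n : ℕ) : (replicate m c ++ replicate n d).Pairwise (· ≤ ·) := by
  simp only [pairwise_append, pairwise_replicate, le_refl, or_true, true_and]
  intro x hx y hy
  rw [eq_of_mem_replicate hx, eq_of_mem_replicate hy]
  exact hcd

theorem List.eq_replicate_append_replicate_of_pairwise {α : Type*} [LinearOrder α] {l : List α}
    {c d : α} (hcd : c < d) (hl : l.Pairwise (· ≤ ·)) (hmem : ∀ y ∈ l, y = c ∨ y = d) :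
    l = replicate (l.count c) c ++ replicate (l.count d) d := by
  refine Perm.eq_of_pairwise' hl (pairwise_replicate_append_replicate hcd.le _ _)
    (perm_iff_count.mpr fun v => ?_)
  rw [count_append, count_replicate, count_replicate]
  by_cases hvc : c = v
  · subst hvc; simp [hcd.ne']
  by_cases hvd : d = v
  · subst hvd; simp [hcd.ne]
  simp only [beq_iff_eq, hvc, hvd, if_false, add_zero, count_eq_zero]
  exact fun hv => (hmem v hv).elim (fun h => hvc h.symm) (fun h => hvd h.symm)

theorem List.getD_mem_flatten {α : Type*} {t : List (List α)} {k p : ℕ} {d : α}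
    (hk : k < t.length) (hp : p < (t.getD k []).length) : (t.getD k []).getD p d ∈ t.flatten := by
  rw [getD_eq_getElem _ _ hk] at hp ⊢
  rw [getD_eq_getElem _ _ hp]
  exact mem_flatten_of_mem (getElem_mem hk) (getElem_mem hp)

section TwoLetterTableau

def twoLetterRow (a k x : ℕ) : List ℕ := replicate x (k + 1) ++ replicate (a - x) (k + 2)

def twoLetterTableau (a b : ℕ) (x : ℕ → ℕ) : List (List ℕ) :=
  (range b).map fun k => twoLetterRow a k (x k)

variable {a b k x : ℕ}

theorem length_twoLetterRow (hx : x ≤ a) : (twoLetterRow a k x).length = a := by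
  simp only [twoLetterRow, length_append, length_replicate]
  omega

theorem count_twoLetterRow (v : ℕ) :
    (twoLetterRow a k x).count v =
      (if k + 1 = v then x else 0) + (if k + 2 = v then a - x else 0) := by
  simp [twoLetterRow, count_append, count_replicate]

theorem getD_twoLetterRow {p : ℕ} (hp : p < a) :
    (twoLetterRow a k x).getD p 0 = if p < x then k + 1 else k + 2 := by
  rw [getD_eq_getElem?_getD, twoLetterRow, getElem?_append, length_replicate]
  by_cases hpx : p < x
  · simp [hpx]
  · simp [hpx, show p - x < a - x by omega]

theorem length_twoLetterTableau (x : ℕ → ℕ) : (twoLetterTableau a b x).length = b := by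
  simp [twoLetterTableau]

theorem getD_twoLetterTableau (x : ℕ → ℕ) (hk : k < b) :
    (twoLetterTableau a b x).getD k [] = twoLetterRow a k (x k) := by
  simp [twoLetterTableau, hk]

theorem twoLetterTableau_congr {x y : ℕ → ℕ} (h : ∀ k < b, x k = y k) :
    twoLetterTableau a b x = twoLetterTableau a b y :=
  map_congr_left fun k hk => by rw [h k (mem_range.mp hk)]

theorem shapeOf_twoLetterTableau {x : ℕ → ℕ} (hx : ∀ k, x k ≤ a) :
    shapeOf (twoLetterTableau a b x) = replicate b a := by
  simp [shapeOf, twoLetterTableau, eq_replicate_iff, length_twoLetterRow (hx _)]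

theorem isSSYT_twoLetterTableau {x : ℕ → ℕ} (ha : 0 < a) (hx : ∀ k, x k ≤ a)
    (hanti : Antitone x) : IsSSYT (twoLetterTableau a b x) := by
  refine ⟨?_, ?_, ?_, ?_⟩
  · simp only [twoLetterTableau, mem_map, not_exists, not_and]
    intro k _ hk
    simpa [hk, ha.ne] using length_twoLetterRow (k := k) (hx k)
  · simp only [twoLetterTableau, mem_map, forall_exists_index, and_imp]
    rintro _ k _ rfl
    exact pairwise_replicate_append_replicate (Nat.le_succ _) _ _
  · simp only [twoLetterTableau, twoLetterRow, mem_map, forall_exists_index, and_imp]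
    rintro _ k _ rfl y hy
    rcases mem_append.mp hy with hy | hy <;> rw [eq_of_mem_replicate hy] <;> omega
  · rw [List.Chain', twoLetterTableau, isChain_map]
    rcases b with _ | n
    · exact isChain_nil
    refine (isChain_range_succ _ n).mpr fun k _ => ⟨by rw [length_twoLetterRow (hx _),
      length_twoLetterRow (hx _)], fun p hp => ?_⟩
    rw [length_twoLetterRow (hx _)] at hp
    have := hanti k.le_succ
    rw [getD_twoLetterRow hp, getD_twoLetterRow hp]
    split_ifs <;> omega

theorem count_flatten_twoLetterTableau (x : ℕ → ℕ) (v : ℕ) :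
    (twoLetterTableau a b x).flatten.count v = ∑ k ∈ Finset.range b,
      ((if k + 1 = v then x k else 0) + (if k + 2 = v then a - x k else 0)) := by
  simp only [count_flatten, twoLetterTableau, map_map, Function.comp_def, count_twoLetterRow,
    sum_map_range_eq_sum_range]

theorem count_one_flatten_twoLetterTableau (x : ℕ → ℕ) :
    (twoLetterTableau a b x).flatten.count 1 = if 0 < b then x 0 else 0 := by
  simp [count_flatten_twoLetterTableau]

theorem count_add_two_flatten_twoLetterTableau (x : ℕ → ℕ) (j : ℕ) :
    (twoLetterTableau a b x).flatten.count (j + 2) =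
      (if j + 1 < b then x (j + 1) else 0) + (if j < b then a - x j else 0) := by
  simp [count_flatten_twoLetterTableau, Finset.sum_add_distrib]

theorem twoLetterTableau_eq_of_hasContent {x y : ℕ → ℕ} {μ : List ℕ}
    (hx : HasContent (twoLetterTableau a b x) μ) (hy : HasContent (twoLetterTableau a b y) μ) :
    twoLetterTableau a b x = twoLetterTableau a b y := by
  refine twoLetterTableau_congr fun k hk => ?_
  induction k with
  | zero =>
    have h := (hx 0).trans (hy 0).symm
    simpa [count_one_flatten_twoLetterTableau, hk] using h
  | succ j ih =>
    have h := (hx (j + 1)).trans (hy (j + 1)).symm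
    simp only [count_add_two_flatten_twoLetterTableau, if_pos hk, if_pos (Nat.lt_of_succ_lt hk),
      ih (Nat.lt_of_succ_lt hk)] at h
    omega

end TwoLetterTableau

theorem HasContent.le_length_of_mem {t : List (List ℕ)} {μ : List ℕ} (h : HasContent t μ)
    {v : ℕ} (hv : v ∈ t.flatten) : v ≤ μ.length := by
  by_contra! hlt
  obtain ⟨i, rfl⟩ : ∃ i, v = i + 1 := ⟨v - 1, by omega⟩
  have hcount := h i
  rw [getD_eq_default _ _ (by omega)] at hcount
  exact count_eq_zero.mp hcount hv

section RectangularShape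

variable {t : List (List ℕ)} {a b : ℕ}

theorem length_of_shapeOf_eq_replicate (h : shapeOf t = replicate b a) : t.length = b := by
  simpa [shapeOf] using congrArg length h

theorem length_getD_of_shapeOf_eq_replicate (h : shapeOf t = replicate b a) {k : ℕ}
    (hk : k < b) : (t.getD k []).length = a := by
  calc (t.getD k []).length = (shapeOf t).getD k 0 := (getD_map (l := t) [] length).symm
    _ = a := by simp [h, getD_eq_getElem?_getD, hk]

end RectangularShape

namespace IsSSYT

variable {t : List (List ℕ)}

theorem length_getD_succ_le (ht : IsSSYT t) {k : ℕ} (hk : k + 1 < t.length) :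
    (t.getD (k + 1) []).length ≤ (t.getD k []).length := by
  rw [getD_eq_getElem _ _ hk, getD_eq_getElem _ _ (Nat.lt_of_succ_lt hk)]
  exact (isChain_iff_getElem.mp ht.2.2.2 k hk).1

theorem getD_lt_getD_succ (ht : IsSSYT t) {k p : ℕ} (hk : k + 1 < t.length)
    (hp : p < (t.getD (k + 1) []).length) :
    (t.getD k []).getD p 0 < (t.getD (k + 1) []).getD p 0 := by
  rw [getD_eq_getElem _ _ hk, getD_eq_getElem _ _ (Nat.lt_of_succ_lt hk)] at *
  exact (isChain_iff_getElem.mp ht.2.2.2 k hk).2 p hp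

theorem getD_getD_add_le (ht : IsSSYT t) {i j p : ℕ} (hij : i ≤ j) (hj : j < t.length)
    (hp : p < (t.getD j []).length) :
    (t.getD i []).getD p 0 + (j - i) ≤ (t.getD j []).getD p 0 := by
  induction j, hij using Nat.le_induction with
  | base => simp
  | succ j hij ih =>
    have := ih (Nat.lt_of_succ_lt hj) (hp.trans_le (ht.length_getD_succ_le hj))
    have := ht.getD_lt_getD_succ hj hp
    omega

theorem getD_getD_pos (ht : IsSSYT t) {k p : ℕ} (hk : k < t.length)
    (hp : p < (t.getD k []).length) : 0 < (t.getD k []).getD p 0 := by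
  rw [getD_eq_getElem _ _ hk] at *
  rw [getD_eq_getElem _ _ hp]
  exact ht.2.2.1 _ (getElem_mem hk) _ (getElem_mem hp)

variable {a b : ℕ}

theorem eq_add_one_or_eq_add_two_of_mem_getD (ht : IsSSYT t)
    (hshape : shapeOf t = replicate b a) (hbound : ∀ v ∈ t.flatten, v ≤ b + 1) {k y : ℕ}
    (hk : k < b) (hy : y ∈ t.getD k []) : y = k + 1 ∨ y = k + 2 := by
  have htb := length_of_shapeOf_eq_replicate hshape
  obtain ⟨p, hp, rfl⟩ := getElem_of_mem hy
  rw [← getD_eq_getElem _ 0 hp]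
  rw [length_getD_of_shapeOf_eq_replicate hshape hk] at hp
  have hcol : ∀ j < b, p < (t.getD j []).length := fun j hj =>
    (length_getD_of_shapeOf_eq_replicate hshape hj).symm ▸ hp
  have hbottom := ht.getD_getD_pos (k := 0) (by omega) (hcol 0 (by omega))
  have hbelow := ht.getD_getD_add_le (Nat.zero_le k) (by omega) (hcol k hk)
  have hlast := hcol (b - 1) (by omega)
  have habove := ht.getD_getD_add_le (show k ≤ b - 1 by omega) (by omega) hlast
  have htop := hbound _ (getD_mem_flatten (d := 0) (by omega) hlast)
  omega

theorem exists_eq_twoLetterTableau (ht : IsSSYT t) (hshape : shapeOf t = replicate b a)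
    (hbound : ∀ v ∈ t.flatten, v ≤ b + 1) : ∃ x, t = twoLetterTableau a b x := by
  have htb := length_of_shapeOf_eq_replicate hshape
  refine ⟨fun k => (t.getD k []).count (k + 1),
    ext_getElem (by rw [htb, length_twoLetterTableau]) fun k hk _ => ?_⟩
  rw [← getD_eq_getElem _ [] hk,
    ← getD_eq_getElem _ [] (by rwa [length_twoLetterTableau, ← htb]),
    getD_twoLetterTableau _ (htb ▸ hk)]
  have hrow := eq_replicate_append_replicate_of_pairwise (show k + 1 < k + 2 by omega)
    (ht.2.1 _ (getD_eq_getElem t [] hk ▸ getElem_mem hk))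
    (fun y hy => ht.eq_add_one_or_eq_add_two_of_mem_getD hshape hbound (htb ▸ hk) hy)
  have hlen := congrArg length hrow
  rw [length_getD_of_shapeOf_eq_replicate hshape (htb ▸ hk), length_append, length_replicate,
    length_replicate] at hlen
  rw [twoLetterRow, hlen, Nat.add_sub_cancel_left]
  exact hrow

end IsSSYT

section LeadingCount

variable {a b : ℕ} {μ : List ℕ}

theorem List.getD_le_of_forall_le (hparts : ∀ x ∈ μ, x ≤ a) (i : ℕ) :
    μ.getD i 0 ≤ a := by
  rcases lt_or_ge i μ.length with hi | hi
  · exact getD_eq_getElem _ _ hi ▸ hparts _ (getElem_mem hi)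
  · exact getD_eq_default _ _ hi ▸ Nat.zero_le a

theorem List.sum_take_le_of_forall_le (hparts : ∀ x ∈ μ, x ≤ a) (k : ℕ) :
    (μ.take k).sum ≤ k * a :=
  calc (μ.take k).sum ≤ (μ.take k).length • a :=
        sum_le_card_nsmul _ _ fun x hx => hparts x (mem_of_mem_take hx)
    _ ≤ k * a := by rw [smul_eq_mul]; exact Nat.mul_le_mul_right _ (length_take_le _ _)

theorem List.mul_le_sum_take_of_forall_le (hsum : μ.sum = a * b) (hlen : μ.length ≤ b + 1)
    (hparts : ∀ x ∈ μ, x ≤ a) {k : ℕ} (hk : k ≤ b) :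
    k * a ≤ (μ.take (k + 1)).sum := by
  have hdrop : (μ.drop (k + 1)).sum ≤ (b - k) * a :=
    calc (μ.drop (k + 1)).sum ≤ (μ.drop (k + 1)).length • a :=
          sum_le_card_nsmul _ _ fun x hx => hparts x (mem_of_mem_drop hx)
      _ ≤ (b - k) * a := by
          rw [smul_eq_mul, length_drop]; exact Nat.mul_le_mul_right _ (by omega)
  have hsplit := sum_take_add_sum_drop μ (k + 1)
  have : (b - k) * a + k * a = a * b := by rw [← Nat.add_mul, Nat.sub_add_cancel hk, mul_comm]
  omega

/-- In the tableau, the letters `≤ k + 1` fill rows `0, …, k - 1` and this many cells of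
row `k`. -/
def leadingCount (a : ℕ) (μ : List ℕ) (k : ℕ) : ℕ := (μ.take (k + 1)).sum - k * a

theorem leadingCount_le (hparts : ∀ x ∈ μ, x ≤ a) (k : ℕ) : leadingCount a μ k ≤ a := by
  have := sum_take_le_of_forall_le hparts (k + 1)
  rw [add_one_mul] at this
  unfold leadingCount
  omega

theorem leadingCount_antitone (hparts : ∀ x ∈ μ, x ≤ a) : Antitone (leadingCount a μ) := by
  refine antitone_nat_of_succ_le fun k => ?_
  have := sum_take_succ_eq_add_getD μ (k + 1)
  have := getD_le_of_forall_le hparts (k + 1)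
  unfold leadingCount
  rw [add_one_mul]
  omega

theorem leadingCount_eq_zero (hsum : μ.sum = a * b) (hlen : μ.length ≤ b + 1) {k : ℕ}
    (hk : b ≤ k) : leadingCount a μ k = 0 := by
  rw [leadingCount, take_of_length_le (by omega), hsum, mul_comm]
  exact Nat.sub_eq_zero_of_le (Nat.mul_le_mul_right _ hk)

theorem leadingCount_succ_add (hsum : μ.sum = a * b) (hlen : μ.length ≤ b + 1)
    (hparts : ∀ x ∈ μ, x ≤ a) {j : ℕ} (hj : j < b) :
    leadingCount a μ (j + 1) + (a - leadingCount a μ j) = μ.getD (j + 1) 0 := by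
  have hstep := sum_take_succ_eq_add_getD μ (j + 1)
  have hupper := sum_take_le_of_forall_le hparts (j + 1)
  have hlower := mul_le_sum_take_of_forall_le hsum hlen hparts hj.le
  have hlower' := mul_le_sum_take_of_forall_le (k := j + 1) hsum hlen hparts hj
  rw [add_one_mul] at hupper hlower'
  unfold leadingCount
  rw [add_one_mul]
  omega

theorem hasContent_twoLetterTableau_leadingCount (hsum : μ.sum = a * b)
    (hlen : μ.length ≤ b + 1) (hparts : ∀ x ∈ μ, x ≤ a) :
    HasContent (twoLetterTableau a b (leadingCount a μ)) μ := by
  have hrows (k : ℕ) : (if k < b then leadingCount a μ k else 0) = leadingCount a μ k := by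
    split_ifs with hk
    · rfl
    · exact (leadingCount_eq_zero hsum hlen (not_lt.mp hk)).symm
  rintro (_ | j)
  · rw [count_one_flatten_twoLetterTableau, hrows, leadingCount, zero_mul, Nat.sub_zero,
      sum_take_succ_eq_add_getD, take_zero, sum_nil, zero_add]
  · rw [count_add_two_flatten_twoLetterTableau, hrows]
    split_ifs with hj
    · exact leadingCount_succ_add hsum hlen hparts hj
    · rw [leadingCount_eq_zero hsum hlen (by omega), getD_eq_default _ _ (by omega)]

end LeadingCount

theorem stmt1_general (a b : ℕ) (ha : 0 < a) (μ : List ℕ)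
    (hsum : μ.sum = a * b)
    (hlen : μ.length ≤ b + 1) (hparts : ∀ x ∈ μ, x ≤ a) :
    ∃! t : List (List ℕ),
      IsSSYT t ∧ shapeOf t = List.replicate b a ∧ HasContent t μ := by
  refine existsUnique_of_exists_of_unique
    ⟨twoLetterTableau a b (leadingCount a μ),
      isSSYT_twoLetterTableau ha (leadingCount_le hparts) (leadingCount_antitone hparts),
      shapeOf_twoLetterTableau (leadingCount_le hparts),
      hasContent_twoLetterTableau_leadingCount hsum hlen hparts⟩ ?_
  have hbound {t : List (List ℕ)} (h : HasContent t μ) : ∀ v ∈ t.flatten, v ≤ b + 1 :=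
    fun _ hv => (h.le_length_of_mem hv).trans hlen
  rintro t₁ t₂ ⟨ht₁, hshape₁, hcontent₁⟩ ⟨ht₂, hshape₂, hcontent₂⟩
  obtain ⟨x₁, rfl⟩ := ht₁.exists_eq_twoLetterTableau hshape₁ (hbound hcontent₁)
  obtain ⟨x₂, rfl⟩ := ht₂.exists_eq_twoLetterTableau hshape₂ (hbound hcontent₂)
  exact twoLetterTableau_eq_of_hasContent hcontent₁ hcontent₂

/-- Let a, b be positive integers and μ a partition of ab with μ ⊆ (a^(b+1)),
i.e. μ has at most b+1 parts, each at most a.  Then there is exactly one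
semistandard Young tableau of shape (a^b) and content μ. -/
theorem stmt1 (a b : ℕ) (ha : 0 < a) (hb : 0 < b) (μ : List ℕ)
    (hμ : IsPartitionL μ) (hsum : μ.sum = a * b)
    (hlen : μ.length ≤ b + 1) (hparts : ∀ x ∈ μ, x ≤ a) :
    ∃! t : List (List ℕ),
      IsSSYT t ∧ shapeOf t = List.replicate b a ∧ HasContent t μ :=
  stmt1_general a b ha μ hsum hlen hparts
end

section
/- Let λ = (λ₁, λ₂) be a partition with |λ| = k ≤ n. The map φ sending a composition α = (α₁,α₂) of n containing λ to the composition obtained from sort(α) by moving n(α/λ) + coinv(α) boxes from the bottom (larger) row to the top row is a bijection from the set Alpha(n,λ,2) = {α ⊨ n : α₁ ≥ λ₁, α₂ ≥ λ₂} to itself. -/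
/-- coinv of a two-part composition: 1 if α₁ < α₂ and 0 otherwise. -/
def coinv2 (α : ℕ × ℕ) : ℕ := if α.1 < α.2 then 1 else 0

/-- n(α/λ) for two-row shapes: the number of columns beyond λ₁ of sort(α)
containing two boxes, i.e. min(α₁,α₂) − λ₁ (truncated at 0). -/
def nstat2 (lam α : ℕ × ℕ) : ℕ := min α.1 α.2 - lam.1

/-- The map φ: sort α into a partition (M, m) with M ≥ m, then move
c = n(α/λ) + coinv(α) boxes from the bottom (larger) row to the top row,
yielding the composition (M − c, m + c). -/
def phiMap (lam α : ℕ × ℕ) : ℕ × ℕ :=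
  (max α.1 α.2 - (nstat2 lam α + coinv2 α),
   min α.1 α.2 + (nstat2 lam α + coinv2 α))

/-- Explicit inverse of φ on the relevant set. -/
def psiMap (lam β : ℕ × ℕ) : ℕ × ℕ :=
  if β.2 < lam.1 then β
  else if (β.2 - lam.1) % 2 = 0 then
    (β.1 + (β.2 - lam.1) / 2, β.2 - (β.2 - lam.1) / 2)
  else
    (lam.1 + (β.2 - lam.1 - 1) / 2, β.1 + β.2 - (lam.1 + (β.2 - lam.1 - 1) / 2))

/-- Let λ = (λ₁,λ₂) be a partition with |λ| = k ≤ n.  The map φ is a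
bijection from Alpha(n,λ,2) = {α ⊨ n : α₁ ≥ λ₁, α₂ ≥ λ₂} to itself. -/
theorem stmt7 (n : ℕ) (lam : ℕ × ℕ) (hlam : lam.2 ≤ lam.1)
    (hk : lam.1 + lam.2 ≤ n) :
    Set.BijOn (phiMap lam)
      {α : ℕ × ℕ | α.1 + α.2 = n ∧ lam.1 ≤ α.1 ∧ lam.2 ≤ α.2}
      {α : ℕ × ℕ | α.1 + α.2 = n ∧ lam.1 ≤ α.1 ∧ lam.2 ≤ α.2} := by
  have hmaps : Set.MapsTo (phiMap lam)
      {α : ℕ × ℕ | α.1 + α.2 = n ∧ lam.1 ≤ α.1 ∧ lam.2 ≤ α.2}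
      {α : ℕ × ℕ | α.1 + α.2 = n ∧ lam.1 ≤ α.1 ∧ lam.2 ≤ α.2} := by
    rintro ⟨a, b⟩ ⟨h1, h2, h3⟩
    simp only [phiMap, nstat2, coinv2, Set.mem_setOf_eq] at *
    split_ifs <;> omega
  have hmaps' : Set.MapsTo (psiMap lam)
      {α : ℕ × ℕ | α.1 + α.2 = n ∧ lam.1 ≤ α.1 ∧ lam.2 ≤ α.2}
      {α : ℕ × ℕ | α.1 + α.2 = n ∧ lam.1 ≤ α.1 ∧ lam.2 ≤ α.2} := by
    rintro ⟨a, b⟩ ⟨h1, h2, h3⟩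
    simp only [psiMap, Set.mem_setOf_eq] at *
    split_ifs <;> omega
  refine Set.InvOn.bijOn ⟨?_, ?_⟩ hmaps hmaps'
  · rintro ⟨a, b⟩ ⟨h1, h2, h3⟩
    simp only [phiMap, psiMap, nstat2, coinv2, Set.mem_setOf_eq, Prod.ext_iff] at *
    split_ifs <;> omega
  · rintro ⟨a, b⟩ ⟨h1, h2, h3⟩
    simp only [phiMap, psiMap, nstat2, coinv2, Set.mem_setOf_eq, Prod.ext_iff] at *
    split_ifs <;> omega
end
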